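/- Let F be a real random variable, G an ℝ^d-valued random vector with positive-definite covariance, and consider the vector control-variates variance V(β) = (1/n)Var(F) − (2/n)βᵀ Cov(G,F) + ((n+k)/(nk)) βᵀ Var(G) β over β ∈ ℝ^d. Then V is a strictly convex quadratic minimized uniquely at β_opt = (k/(k+n)) Var(G)^{-1} Cov(G,F), with minimum value (1/n)(1 − (k/(k+n)) ρ²(G,F)) Var(F), where ρ²(G,F) = Cov(F,G)ᵀ Var(G)^{-1} Cov(G,F)/Var(F). -/

import Mathlib

open MeasureTheory ProbabilityTheory Matrix

/-- Covariance of two real random variables. -/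
noncomputable def cov {Ω : Type*} [MeasurableSpace Ω] (X Y : Ω → ℝ) (μ : Measure Ω) : ℝ :=
  ∫ ω, (X ω - ∫ x, X x ∂μ) * (Y ω - ∫ x, Y x ∂μ) ∂μ

/-- Covariance matrix of an `ℝ^d`-valued random vector. -/
noncomputable def covMatrix {Ω : Type*} [MeasurableSpace Ω] {d : ℕ}
    (G : Ω → Fin d → ℝ) (μ : Measure Ω) : Matrix (Fin d) (Fin d) ℝ :=
  Matrix.of fun i j => cov (fun ω => G ω i) (fun ω => G ω j) μ

/-- Cross-covariance vector of an `ℝ^d`-valued random vector with a scalar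
random variable. -/
noncomputable def covVec {Ω : Type*} [MeasurableSpace Ω] {d : ℕ}
    (G : Ω → Fin d → ℝ) (F : Ω → ℝ) (μ : Measure Ω) : Fin d → ℝ :=
  fun i => cov (fun ω => G ω i) F μ

/-! With `S = Var(G)`, `e = (n+k)/(nk)` and `t = k/(k+n)` one has `2/n = 2et` and
`S βopt = t Cov(G,F)`, so completing the square gives
`V β = V βopt + e (β - βopt)ᵀ S (β - βopt)`. Positive definiteness of `S` then yields strict
convexity and the unique minimiser, and `n e t² = t` gives the minimum value. -/

namespace Matrix

variable {ι R : Type*} [Fintype ι]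

lemma add_smul_dotProduct_mulVec_add_smul [CommRing R] (A : Matrix ι ι R) (y w : ι → R) (s : R) :
    (y + s • w) ⬝ᵥ A *ᵥ (y + s • w)
      = y ⬝ᵥ A *ᵥ y + s * (y ⬝ᵥ A *ᵥ w + w ⬝ᵥ A *ᵥ y) + s ^ 2 * (w ⬝ᵥ A *ᵥ w) := by
  simp only [mulVec_add, mulVec_smul, add_dotProduct, dotProduct_add, smul_dotProduct,
    dotProduct_smul, smul_eq_mul]
  ring

lemma IsSymm.dotProduct_mulVec_sub_two_mul_dotProduct [CommRing R] {A : Matrix ι ι R}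
    (hA : A.IsSymm) {x₀ b : ι → R} (hb : A *ᵥ x₀ = b) (x : ι → R) :
    x ⬝ᵥ A *ᵥ x - 2 * (x ⬝ᵥ b)
      = (x - x₀) ⬝ᵥ A *ᵥ (x - x₀) - x₀ ⬝ᵥ b := by
  have hswap : x₀ ⬝ᵥ A *ᵥ x = x ⬝ᵥ b := by
    rw [dotProduct_mulVec, ← mulVec_transpose, hA.eq, dotProduct_comm, hb]
  simp only [mulVec_sub, sub_dotProduct, dotProduct_sub, hswap, hb]
  ring

variable {A : Matrix ι ι ℝ}

lemma PosDef.dotProduct_mulVec_pos' (hA : A.PosDef) {x : ι → ℝ} (hx : x ≠ 0) :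
    0 < x ⬝ᵥ A *ᵥ x := by
  simpa using hA.dotProduct_mulVec_pos hx

lemma PosDef.strictConvexOn_dotProduct_mulVec (hA : A.PosDef) :
    StrictConvexOn ℝ Set.univ fun x => x ⬝ᵥ A *ᵥ x := by
  refine ⟨convex_univ, fun x _ y _ hxy a b ha hb hab => ?_⟩
  obtain rfl : b = 1 - a := eq_sub_of_add_eq' hab
  have hcomb : a • x + (1 - a) • y = y + a • (x - y) := by module
  have hx := add_smul_dotProduct_mulVec_add_smul A y (x - y) 1
  rw [one_smul, add_sub_cancel] at hx
  have hQ := hA.dotProduct_mulVec_pos' (sub_ne_zero.mpr hxy)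
  simp only [smul_eq_mul]
  rw [hcomb, add_smul_dotProduct_mulVec_add_smul, hx]
  nlinarith [mul_pos (mul_pos ha hb) hQ]

lemma PosDef.strictConvexOn_quadratic (hA : A.PosDef) (a s e : ℝ) (b : ι → ℝ) (he : 0 < e) :
    StrictConvexOn ℝ Set.univ fun x => a - s * (x ⬝ᵥ b) + e * (x ⬝ᵥ A *ᵥ x) := by
  have haffine : ConvexOn ℝ Set.univ fun x : ι → ℝ => a - s * (x ⬝ᵥ b) := by
    refine ⟨convex_univ, fun x _ y _ p q _ _ hpq => le_of_eq ?_⟩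
    simp only [add_dotProduct, smul_dotProduct, smul_eq_mul]
    linear_combination (-a) * hpq
  have hquad : StrictConvexOn ℝ Set.univ fun x => e * (x ⬝ᵥ A *ᵥ x) := by
    simpa only [smul_mulVec, dotProduct_smul, smul_eq_mul] using
      (hA.smul he).strictConvexOn_dotProduct_mulVec
  exact haffine.add_strictConvexOn hquad

end Matrix

theorem vector_control_variates_variance_minimization_general
    {Ω : Type*} [MeasurableSpace Ω] (P : Measure Ω)
    {d : ℕ} (F : Ω → ℝ) (G : Ω → Fin d → ℝ)
    (hVarF : 0 < variance F P)
    (hpd : (covMatrix G P).PosDef)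
    (n k : ℕ) (hn : 0 < n) (hk : 0 < k) :
    letI V : (Fin d → ℝ) → ℝ := fun β =>
      (1 / (n : ℝ)) * variance F P - (2 / (n : ℝ)) * (β ⬝ᵥ covVec G F P)
        + (((n : ℝ) + k) / ((n : ℝ) * k)) * (β ⬝ᵥ covMatrix G P *ᵥ β)
    letI βopt : Fin d → ℝ := ((k : ℝ) / ((k : ℝ) + n)) • ((covMatrix G P)⁻¹ *ᵥ covVec G F P)
    StrictConvexOn ℝ Set.univ V ∧
    (∀ β : Fin d → ℝ, V βopt ≤ V β) ∧
    (∀ β : Fin d → ℝ, V β = V βopt → β = βopt) ∧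
    V βopt = (1 / (n : ℝ))
        * (1 - ((k : ℝ) / ((k : ℝ) + n))
            * (covVec G F P ⬝ᵥ (covMatrix G P)⁻¹ *ᵥ covVec G F P / variance F P))
        * variance F P := by
  set S := covMatrix G P
  set c := covVec G F P
  set t : ℝ := k / (k + n) with ht
  set e : ℝ := (n + k) / (n * k) with he_def
  have hn' : (n : ℝ) ≠ 0 := by positivity
  have he : 0 < e := by positivity
  have hnet : n * e * t = 1 := by rw [ht, he_def]; field_simp; ring
  clear_value t e
  set βopt := t • (S⁻¹ *ᵥ c)
  have hSβ : S *ᵥ βopt = t • c := by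
    rw [mulVec_smul, mulVec_mulVec, mul_nonsing_inv _ ((isUnit_iff_isUnit_det S).mp hpd.isUnit),
      one_mulVec]
  set m := variance F P / n - e * (βopt ⬝ᵥ t • c)
  have hV : ∀ β, 1 / n * variance F P - 2 / n * (β ⬝ᵥ c) + e * (β ⬝ᵥ S *ᵥ β)
      = m + e * ((β - βopt) ⬝ᵥ S *ᵥ (β - βopt)) := fun β => by
    have hsq := (isHermitian_iff_isSymm.mp hpd.1).dotProduct_mulVec_sub_two_mul_dotProduct hSβ β
    have hcoef : 2 / (n : ℝ) = e * (2 * t) := by field_simp; linear_combination -hnet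
    simp only [m, hcoef, dotProduct_smul, smul_eq_mul] at hsq ⊢
    linear_combination e * hsq
  refine ⟨hpd.strictConvexOn_quadratic _ _ _ _ he, ?_⟩
  beta_reduce
  simp only [hV, sub_self, zero_dotProduct, mul_zero, add_zero]
  refine ⟨fun β => ?_, fun β hβ => ?_, ?_⟩
  · exact le_add_of_nonneg_right (mul_nonneg he.le (hpd.posSemidef.dotProduct_mulVec_nonneg _))
  · by_contra hne
    have := mul_pos he (hpd.dotProduct_mulVec_pos' (sub_ne_zero.mpr hne))
    linarith
  · simp only [m, βopt, dotProduct_smul, smul_eq_mul, dotProduct_comm _ c]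
    field_simp
    linear_combination (-t * (c ⬝ᵥ S⁻¹ *ᵥ c)) * hnet

/-- The vector control-variates variance
`V(β) = (1/n) Var F - (2/n) βᵀ Cov(G,F) + ((n+k)/(nk)) βᵀ Var(G) β` is a
strictly convex quadratic, uniquely minimized at
`β_opt = (k/(k+n)) Var(G)⁻¹ Cov(G,F)`, with minimum value
`(1/n)(1 - (k/(k+n)) ρ²(G,F)) Var F` where
`ρ²(G,F) = Cov(F,G)ᵀ Var(G)⁻¹ Cov(G,F)/Var F`. -/
theorem vector_control_variates_variance_minimization
    {Ω : Type*} [MeasurableSpace Ω] (P : Measure Ω) [IsProbabilityMeasure P]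
    {d : ℕ} (F : Ω → ℝ) (G : Ω → Fin d → ℝ)
    (hF : MemLp F 2 P) (hG : ∀ i, MemLp (fun ω => G ω i) 2 P)
    (hVarF : 0 < variance F P)
    (hpd : (covMatrix G P).PosDef)
    (n k : ℕ) (hn : 0 < n) (hk : 0 < k) :
    letI V : (Fin d → ℝ) → ℝ := fun β =>
      (1 / (n : ℝ)) * variance F P - (2 / (n : ℝ)) * (β ⬝ᵥ covVec G F P)
        + (((n : ℝ) + k) / ((n : ℝ) * k)) * (β ⬝ᵥ covMatrix G P *ᵥ β)
    letI βopt : Fin d → ℝ := ((k : ℝ) / ((k : ℝ) + n)) • ((covMatrix G P)⁻¹ *ᵥ covVec G F P)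
    StrictConvexOn ℝ Set.univ V ∧
    (∀ β : Fin d → ℝ, V βopt ≤ V β) ∧
    (∀ β : Fin d → ℝ, V β = V βopt → β = βopt) ∧
    V βopt = (1 / (n : ℝ))
        * (1 - ((k : ℝ) / ((k : ℝ) + n))
            * (covVec G F P ⬝ᵥ (covMatrix G P)⁻¹ *ᵥ covVec G F P / variance F P))
        * variance F P :=
  vector_control_variates_variance_minimization_general P F G hVarF hpd n k hn hk
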